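/- Define the potential Φ(x) = ∑_{n : x_n ≠ 0} T_n^{x_n} − ∑_{c=1}^C ( |{{n,m} ∈ E : x_n = x_m = c}| + |{n : x_n = c}|/2 ) for a spatial QoS satisfaction game on interference graph G = (N, E). If a player performs a better response update changing the profile from x to y, then Φ(y) ≥ Φ(x) + 1/2. -/
import Mathlib


open Finset

/-- Local congestion: number of players in the closed neighborhood of `n`
(including `n` itself) using channel `c`. -/
def lcong {N C : ℕ} (G : SimpleGraph (Fin N)) [DecidableRel G.Adj]
    (x : Fin N → Option (Fin C)) (n : Fin N) (c : Fin C) : ℕ :=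
  (Finset.univ.filter fun m => (m = n ∨ G.Adj n m) ∧ x m = some c).card

/-- Utility of player `n` in a spatial QoS satisfaction game. -/
def sutil {N C : ℕ} (G : SimpleGraph (Fin N)) [DecidableRel G.Adj]
    (T : Fin N → Fin C → ℤ) (x : Fin N → Option (Fin C)) (n : Fin N) : ℤ :=
  match x n with
  | none => 0
  | some c => if (lcong G x n c : ℤ) ≤ T n c then 1 else -1

/-- The potential function Φ: the sum of the thresholds which the non-dormant users
associate with their channels, minus (for each channel) the number of edges linking
users of that channel (counted as half the number of ordered adjacent same-channel
pairs), minus half the number of users of that channel. -/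
noncomputable def Phi {N C : ℕ} (G : SimpleGraph (Fin N)) [DecidableRel G.Adj]
    (T : Fin N → Fin C → ℤ) (x : Fin N → Option (Fin C)) : ℚ :=
  (∑ n : Fin N, match x n with
    | none => (0 : ℚ)
    | some c => (T n c : ℚ))
  - ∑ c : Fin C,
      ((((Finset.univ.filter fun p : Fin N × Fin N =>
            G.Adj p.1 p.2 ∧ x p.1 = some c ∧ x p.2 = some c).card : ℚ) / 2)
        + ((Finset.univ.filter fun n => x n = some c).card : ℚ) / 2)

/-- A better response update: some player unilaterally changes strategy and strictly
increases its own utility. -/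
def IsBR {N C : ℕ} (G : SimpleGraph (Fin N)) [DecidableRel G.Adj]
    (T : Fin N → Fin C → ℤ) (x y : Fin N → Option (Fin C)) : Prop :=
  ∃ (n : Fin N) (s : Option (Fin C)),
    y = Function.update x n s ∧ sutil G T x n < sutil G T y n

/-- Pure Nash equilibrium of a spatial QoS satisfaction game. -/
def IsNashS {N C : ℕ} (G : SimpleGraph (Fin N)) [DecidableRel G.Adj]
    (T : Fin N → Fin C → ℤ) (x : Fin N → Option (Fin C)) : Prop :=
  ∀ (n : Fin N) (s : Option (Fin C)),
    sutil G T (Function.update x n s) n ≤ sutil G T x n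


section Aux

variable {N C : ℕ} (G : SimpleGraph (Fin N)) [DecidableRel G.Adj]

/-- Number (as a rational) of neighbors of `n` using channel `c`. -/
noncomputable def Dq (x : Fin N → Option (Fin C)) (n : Fin N) (c : Fin C) : ℚ :=
  ∑ m ∈ ({n}ᶜ : Finset (Fin N)), if G.Adj n m ∧ x m = some c then (1:ℚ) else 0

noncomputable def fT (T : Fin N → Fin C → ℤ) (m : Fin N) : Option (Fin C) → ℚ
  | none => 0
  | some c => (T m c : ℚ)

lemma Phi_eq (T : Fin N → Fin C → ℤ) (x : Fin N → Option (Fin C)) :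
    Phi G T x = (∑ m : Fin N, fT T m (x m))
      - ∑ c : Fin C,
        ((((Finset.univ.filter fun p : Fin N × Fin N =>
              G.Adj p.1 p.2 ∧ x p.1 = some c ∧ x p.2 = some c).card : ℚ) / 2)
          + ((Finset.univ.filter fun n => x n = some c).card : ℚ) / 2) := by
  rfl

noncomputable def gval (T : Fin N → Fin C → ℤ) (x : Fin N → Option (Fin C)) (n : Fin N) :
    Option (Fin C) → ℚ
  | none => 0
  | some c => (T n c : ℚ) - Dq G x n c - 1/2

lemma pair_decomp (x : Fin N → Option (Fin C)) (n : Fin N) (c : Fin C) :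
    (∑ p : Fin N × Fin N, if G.Adj p.1 p.2 ∧ x p.1 = some c ∧ x p.2 = some c then (1:ℚ) else 0)
    = 2 * (if x n = some c then (1:ℚ) else 0) * Dq G x n c
      + ∑ a ∈ ({n}ᶜ : Finset (Fin N)), ∑ b ∈ ({n}ᶜ : Finset (Fin N)),
          if G.Adj a b ∧ x a = some c ∧ x b = some c then (1:ℚ) else 0 := by
  rw [Fintype.sum_prod_type, Fintype.sum_eq_add_sum_compl n]
  have h1 : (∑ b : Fin N, if G.Adj n b ∧ x n = some c ∧ x b = some c then (1:ℚ) else 0)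
      = (if x n = some c then (1:ℚ) else 0) * Dq G x n c := by
    by_cases h : x n = some c
    · rw [Fintype.sum_eq_add_sum_compl n]
      simp [h, Dq, G.irrefl]
    · simp [h]
  have h2 : ∀ a ∈ ({n}ᶜ : Finset (Fin N)),
      (∑ b : Fin N, if G.Adj a b ∧ x a = some c ∧ x b = some c then (1:ℚ) else 0)
      = (if G.Adj n a ∧ x a = some c then (1:ℚ) else 0) * (if x n = some c then (1:ℚ) else 0)
        + ∑ b ∈ ({n}ᶜ : Finset (Fin N)),
            if G.Adj a b ∧ x a = some c ∧ x b = some c then (1:ℚ) else 0 := by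
    intro a _
    rw [Fintype.sum_eq_add_sum_compl n]
    congr 1
    have hc : G.Adj a n ↔ G.Adj n a := G.adj_comm a n
    by_cases h : G.Adj n a <;> by_cases h' : x a = some c <;>
      by_cases h'' : x n = some c <;> simp [h, h', h'', hc]
  rw [Finset.sum_congr rfl h2, Finset.sum_add_distrib, h1]
  have h3 : (∑ a ∈ ({n}ᶜ : Finset (Fin N)),
      (if G.Adj n a ∧ x a = some c then (1:ℚ) else 0) * (if x n = some c then (1:ℚ) else 0))
      = (if x n = some c then (1:ℚ) else 0) * Dq G x n c := by
    rw [Dq, ← Finset.sum_mul, mul_comm]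
  rw [h3]; ring

lemma sum_ind_option (s : Option (Fin C)) (q : Fin C → ℚ) :
    (∑ c : Fin C, (if s = some c then (1:ℚ) else 0) * q c)
    = Option.casesOn s 0 q := by
  cases s with
  | none => simp
  | some cb =>
    simp only [Option.some.injEq]
    rw [Finset.sum_eq_single cb]
    · simp
    · intro b _ hb; simp [Ne.symm hb]
    · intro h; exact absurd (Finset.mem_univ cb) h

lemma Phi_update (T : Fin N → Fin C → ℤ) (x : Fin N → Option (Fin C)) (n : Fin N)
    (s : Option (Fin C)) :
    Phi G T (Function.update x n s)
    = Phi G T x + gval G T x n s - gval G T x n (x n) := by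
  set y := Function.update x n s with hydef
  have hy : ∀ m ∈ ({n}ᶜ : Finset (Fin N)), y m = x m := by
    intro m hm
    exact Function.update_of_ne (by simpa using hm) _ _
  have hyn : y n = s := Function.update_self _ _ _
  -- threshold sum
  have hT : (∑ m : Fin N, fT T m (y m))
      = (∑ m : Fin N, fT T m (x m)) + fT T n s - fT T n (x n) := by
    rw [Fintype.sum_eq_add_sum_compl n (fun m => fT T m (y m)),
        Fintype.sum_eq_add_sum_compl n (fun m => fT T m (x m))]
    rw [Finset.sum_congr rfl (fun m hm => by rw [hy m hm])]
    rw [hyn]; ring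
  -- per-channel card of users
  have hQ : ∀ c : Fin C, ((Finset.univ.filter fun m => y m = some c).card : ℚ)
      = ((Finset.univ.filter fun m => x m = some c).card : ℚ)
        + (if s = some c then (1:ℚ) else 0) - (if x n = some c then (1:ℚ) else 0) := by
    intro c
    rw [Finset.card_filter, Finset.card_filter]
    push_cast
    rw [Fintype.sum_eq_add_sum_compl n (fun m => if y m = some c then (1:ℚ) else 0),
        Fintype.sum_eq_add_sum_compl n (fun m => if x m = some c then (1:ℚ) else 0)]
    rw [Finset.sum_congr rfl (fun m hm => by rw [hy m hm])]
    rw [hyn]; ring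
  -- per-channel pair count
  have hDq : ∀ c : Fin C, Dq G y n c = Dq G x n c := by
    intro c
    exact Finset.sum_congr rfl (fun m hm => by rw [hy m hm])
  have hP : ∀ c : Fin C, ((Finset.univ.filter fun p : Fin N × Fin N =>
        G.Adj p.1 p.2 ∧ y p.1 = some c ∧ y p.2 = some c).card : ℚ)
      = ((Finset.univ.filter fun p : Fin N × Fin N =>
        G.Adj p.1 p.2 ∧ x p.1 = some c ∧ x p.2 = some c).card : ℚ)
        + 2 * ((if s = some c then (1:ℚ) else 0) - (if x n = some c then (1:ℚ) else 0))
          * Dq G x n c := by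
    intro c
    rw [Finset.card_filter, Finset.card_filter]
    push_cast
    rw [show (∑ p : Fin N × Fin N, if G.Adj p.1 p.2 ∧ y p.1 = some c ∧ y p.2 = some c
          then (1:ℚ) else 0) = _ from pair_decomp G y n c,
        show (∑ p : Fin N × Fin N, if G.Adj p.1 p.2 ∧ x p.1 = some c ∧ x p.2 = some c
          then (1:ℚ) else 0) = _ from pair_decomp G x n c]
    rw [hDq c, hyn]
    have : (∑ a ∈ ({n}ᶜ : Finset (Fin N)), ∑ b ∈ ({n}ᶜ : Finset (Fin N)),
        if G.Adj a b ∧ y a = some c ∧ y b = some c then (1:ℚ) else 0)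
        = ∑ a ∈ ({n}ᶜ : Finset (Fin N)), ∑ b ∈ ({n}ᶜ : Finset (Fin N)),
        if G.Adj a b ∧ x a = some c ∧ x b = some c then (1:ℚ) else 0 := by
      refine Finset.sum_congr rfl fun a ha => Finset.sum_congr rfl fun b hb => ?_
      rw [hy a ha, hy b hb]
    rw [this]; ring
  -- put it together
  rw [Phi_eq, Phi_eq, hT]
  have hsum : (∑ c : Fin C,
      ((((Finset.univ.filter fun p : Fin N × Fin N =>
            G.Adj p.1 p.2 ∧ y p.1 = some c ∧ y p.2 = some c).card : ℚ) / 2)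
        + ((Finset.univ.filter fun m => y m = some c).card : ℚ) / 2))
      = (∑ c : Fin C,
      ((((Finset.univ.filter fun p : Fin N × Fin N =>
            G.Adj p.1 p.2 ∧ x p.1 = some c ∧ x p.2 = some c).card : ℚ) / 2)
        + ((Finset.univ.filter fun m => x m = some c).card : ℚ) / 2))
      + ∑ c : Fin C, ((if s = some c then (1:ℚ) else 0)
          * (Dq G x n c + 1/2))
      - ∑ c : Fin C, ((if x n = some c then (1:ℚ) else 0)
          * (Dq G x n c + 1/2)) := by
    rw [← Finset.sum_add_distrib, ← Finset.sum_sub_distrib]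
    refine Finset.sum_congr rfl fun c _ => ?_
    rw [hP c, hQ c]; ring
  rw [hsum, sum_ind_option, sum_ind_option]
  cases s <;> cases hxc : x n <;> simp [gval, fT, hxc] <;> ring

lemma lcong_eq (x z : Fin N → Option (Fin C)) (n : Fin N)
    (hz : ∀ m, m ≠ n → z m = x m) (c : Fin C) :
    (lcong G z n c : ℚ) = (if z n = some c then 1 else 0) + Dq G x n c := by
  rw [lcong, Finset.card_filter]
  push_cast
  rw [Fintype.sum_eq_add_sum_compl n (fun m =>
    if (m = n ∨ G.Adj n m) ∧ z m = some c then (1:ℚ) else 0)]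
  have h1 : (if (n = n ∨ G.Adj n n) ∧ z n = some c then (1:ℚ) else 0)
      = if z n = some c then (1:ℚ) else 0 := by simp
  have h2 : (∑ m ∈ ({n}ᶜ : Finset (Fin N)),
      if (m = n ∨ G.Adj n m) ∧ z m = some c then (1:ℚ) else 0) = Dq G x n c := by
    refine Finset.sum_congr rfl fun m hm => ?_
    have hmn : m ≠ n := by simpa using hm
    rw [hz m hmn]
    simp [hmn]
  rw [h1, h2]

lemma sutil_ge (T : Fin N → Fin C → ℤ) (x : Fin N → Option (Fin C)) (n : Fin N) :
    -1 ≤ sutil G T x n := by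
  rw [sutil]
  rcases x n with _ | c
  · norm_num
  · show -1 ≤ if ((lcong G x n c : ℤ) ≤ T n c) then (1:ℤ) else -1
    split <;> norm_num

end Aux

/-- Every better response update increases the potential Φ by at least 1/2. -/
theorem potential_increase {N C : ℕ} (G : SimpleGraph (Fin N)) [DecidableRel G.Adj]
    (T : Fin N → Fin C → ℤ) (x y : Fin N → Option (Fin C))
    (hBR : IsBR G T x y) :
    Phi G T x + 1 / 2 ≤ Phi G T y := by
  obtain ⟨n, s, hy, hlt⟩ := hBR
  subst hy
  rw [Phi_update G T x n s]
  have hupd : ∀ m, m ≠ n → Function.update x n s m = x m :=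
    fun m hm => Function.update_of_ne hm _ _
  have hlx : ∀ c, (lcong G x n c : ℚ) = (if x n = some c then 1 else 0) + Dq G x n c :=
    fun c => lcong_eq G x x n (fun _ _ => rfl) c
  have hly : ∀ c, (lcong G (Function.update x n s) n c : ℚ)
      = (if s = some c then 1 else 0) + Dq G x n c := by
    intro c
    rw [lcong_eq G x (Function.update x n s) n hupd c, Function.update_self]
  have key : (1:ℚ)/2 ≤ gval G T x n s - gval G T x n (x n) := by
    rw [sutil, sutil, Function.update_self] at hlt
    cases hs : s with
    | none =>
      cases hxn : x n with
      | none => rw [hs, hxn] at hlt; dsimp only at hlt; exact absurd hlt (lt_irrefl 0)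
      | some ca =>
        subst hs
        rw [hxn] at hlt
        dsimp only at hlt
        have hT : ¬ ((lcong G x n ca : ℤ) ≤ T n ca) := by
          intro h; rw [if_pos h] at hlt; omega
        have hT' : (T n ca : ℚ) + 1 ≤ (lcong G x n ca : ℚ) := by
          push_neg at hT
          have : T n ca + 1 ≤ (lcong G x n ca : ℤ) := by omega
          exact_mod_cast this
        have hl := hlx ca
        rw [hxn, if_pos rfl] at hl
        simp only [gval]
        rw [hl] at hT'
        linarith
    | some cb =>
      subst hs
      dsimp only at hlt
      have hTy : (lcong G (Function.update x n (some cb)) n cb : ℤ) ≤ T n cb := by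
        by_contra h
        rw [if_neg h] at hlt
        have := sutil_ge G T x n
        rw [sutil] at this
        omega
      have hTy' : (lcong G (Function.update x n (some cb)) n cb : ℚ) ≤ (T n cb : ℚ) := by
        exact_mod_cast hTy
      have hl := hly cb
      rw [if_pos rfl] at hl
      rw [hl] at hTy'
      cases hxn : x n with
      | none =>
        simp only [gval]
        linarith
      | some ca =>
        rw [hxn] at hlt
        dsimp only at hlt
        rw [if_pos hTy] at hlt
        have hTx : ¬ ((lcong G x n ca : ℤ) ≤ T n ca) := by
          intro h; rw [if_pos h] at hlt; omega
        have hTx' : (T n ca : ℚ) + 1 ≤ (lcong G x n ca : ℚ) := by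
          push_neg at hTx
          have : T n ca + 1 ≤ (lcong G x n ca : ℤ) := by omega
          exact_mod_cast this
        have hl2 := hlx ca
        rw [hxn, if_pos rfl] at hl2
        rw [hl2] at hTx'
        simp only [gval]
        linarith
  linarith
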